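/- arXiv:1911.07793 — 2 statements merged into one kernel-verified Lean document; each statement's English description precedes it below -/
import Mathlib

section
/- Every finite simple graph G is the intersection graph of a finite family of finite connected subsets of ℤ³: for each vertex v there is a finite set P_v ⊆ ℤ³ whose induced adjacency graph (points adjacent when at distance 1 in the grid) is connected, such that P_u ∩ P_v ≠ ∅ if and only if uv ∈ E(G). -/
universe u

/-- Two points of `ℤ³` are grid-adjacent when they are at `ℓ¹`-distance `1`. -/
def gridAdj (p q : ℤ × ℤ × ℤ) : Prop :=
  |p.1 - q.1| + |p.2.1 - q.2.1| + |p.2.2 - q.2.2| = 1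

/-- A finite subset of `ℤ³` is grid-connected when the graph joining its points
at distance `1` is connected. -/
def GridConnected (P : Finset (ℤ × ℤ × ℤ)) : Prop :=
  (SimpleGraph.fromRel (fun p q : P => gridAdj p.1 q.1)).Connected

open Finset
namespace PolyAux

lemma gridAdj_ne {p q : ℤ × ℤ × ℤ} (h : gridAdj p q) : p ≠ q := by
  rintro rfl; simp [gridAdj] at h

lemma adj_of_gridAdj {P : Finset (ℤ × ℤ × ℤ)} {p q : ℤ × ℤ × ℤ} (hp : p ∈ P) (hq : q ∈ P)
    (h : gridAdj p q) :
    (SimpleGraph.fromRel (fun a b : P => gridAdj a.1 b.1)).Adj ⟨p, hp⟩ ⟨q, hq⟩ :=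
  ⟨fun heq => gridAdj_ne h (congrArg Subtype.val heq), Or.inl h⟩

lemma gridAdj_x (x y z : ℤ) : gridAdj (x, y, z) (x + 1, y, z) := by
  simp [gridAdj, show x - (x + 1) = -1 from by ring]

lemma gridAdj_y (x y z : ℤ) : gridAdj (x, y, z) (x, y + 1, z) := by
  simp [gridAdj, show y - (y + 1) = -1 from by ring]

lemma gridAdj_z (x y z : ℤ) : gridAdj (x, y, z) (x, y, z + 1) := by
  simp [gridAdj, show z - (z + 1) = -1 from by ring]

lemma gridConnected_of_reach {P : Finset (ℤ × ℤ × ℤ)} {p₀ : ℤ × ℤ × ℤ} (h₀ : p₀ ∈ P)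
    (h : ∀ p (hp : p ∈ P),
      (SimpleGraph.fromRel fun a b : P => gridAdj a.1 b.1).Reachable ⟨p₀, h₀⟩ ⟨p, hp⟩) :
    GridConnected P := by
  haveI : Nonempty P := ⟨⟨p₀, h₀⟩⟩
  exact ⟨fun a b => ((h a.1 a.2).symm.trans (h b.1 b.2))⟩

def xe (n a b : ℕ) : ℕ := n * min a b + max a b + 1

lemma xe_comm (n a b : ℕ) : xe n a b = xe n b a := by
  simp [xe, min_comm, max_comm]

lemma xe_le {n a b : ℕ} (ha : a < n) (hb : b < n) : xe n a b ≤ n * n := by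
  have h1 : min a b + 1 ≤ n := by
    have := min_le_left a b; omega
  have h2 : max a b + 1 ≤ n := by
    have := max_lt ha hb; omega
  calc xe n a b = n * min a b + (max a b + 1) := by simp [xe]; ring
    _ ≤ n * min a b + n := by omega
    _ = n * (min a b + 1) := by ring
    _ ≤ n * n := Nat.mul_le_mul_left n h1

lemma xe_inj {n a b c d : ℕ} (ha : a < n) (hb : b < n) (hc : c < n) (hd : d < n)
    (h : xe n a b = xe n c d) : min a b = min c d ∧ max a b = max c d := by
  have hn : 0 < n := by omega
  have h1 : max a b < n := max_lt ha hb
  have h2 : max c d < n := max_lt hc hd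
  have h3 : n * min a b + max a b = n * min c d + max c d := by
    simpa [xe] using h
  have d1 : (n * min a b + max a b) / n = min a b := by
    rw [Nat.mul_add_div hn, Nat.div_eq_of_lt h1]; omega
  have d2 : (n * min c d + max c d) / n = min c d := by
    rw [Nat.mul_add_div hn, Nat.div_eq_of_lt h2]; omega
  have hmin : min a b = min c d := by rw [← d1, ← d2, h3]
  constructor
  · exact hmin
  · nlinarith [h3]

section
variable {V : Type u} [Fintype V] [DecidableEq V]

def pcube (G : SimpleGraph V) [DecidableRel G.Adj] (f : V → ℕ) (n : ℕ) (v : V) :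
    Finset (ℤ × ℤ × ℤ) :=
  (range (n * n + 1)).image (fun x : ℕ => ((x : ℤ), (f v : ℤ), (0 : ℤ))) ∪
    (univ.filter (G.Adj v)).biUnion
      (fun u => (range (f v + 1)).image
        (fun y : ℕ => ((xe n (f u) (f v) : ℤ), (y : ℤ), (1 : ℤ))))

omit [DecidableEq V] in
lemma mem_pcube {G : SimpleGraph V} [DecidableRel G.Adj] {f : V → ℕ} {n : ℕ} {v : V}
    {p : ℤ × ℤ × ℤ} :
    p ∈ pcube G f n v ↔
      (∃ x ≤ n * n, p = ((x : ℤ), (f v : ℤ), (0 : ℤ))) ∨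
        ∃ u, G.Adj v u ∧ ∃ y ≤ f v, p = ((xe n (f u) (f v) : ℤ), (y : ℤ), (1 : ℤ)) := by
  simp only [pcube, mem_union, mem_image, mem_range, mem_biUnion, mem_filter, mem_univ,
    true_and, Nat.lt_succ_iff]
  constructor
  · rintro (⟨x, hx, rfl⟩ | ⟨u, hu, y, hy, rfl⟩)
    · exact Or.inl ⟨x, hx, rfl⟩
    · exact Or.inr ⟨u, hu, y, hy, rfl⟩
  · rintro (⟨x, hx, rfl⟩ | ⟨u, hu, y, hy, rfl⟩)
    · exact Or.inl ⟨x, hx, rfl⟩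
    · exact Or.inr ⟨u, hu, y, hy, rfl⟩

omit [DecidableEq V] in
lemma pcube_connected (G : SimpleGraph V) [DecidableRel G.Adj] {f : V → ℕ} {n : ℕ}
    (hf : ∀ v, f v < n) (v : V) : GridConnected (pcube G f n v) := by
  set P := pcube G f n v with hP
  have hrow : ∀ x : ℕ, x ≤ n * n → ((x : ℤ), (f v : ℤ), (0 : ℤ)) ∈ P :=
    fun x hx => mem_pcube.2 (Or.inl ⟨x, hx, rfl⟩)
  have h₀ : ((0 : ℤ), (f v : ℤ), (0 : ℤ)) ∈ P := hrow 0 (Nat.zero_le _)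
  apply gridConnected_of_reach h₀
  set GH := SimpleGraph.fromRel fun a b : P => gridAdj a.1 b.1 with hGH
  have reachrow : ∀ x : ℕ, ∀ hx : x ≤ n * n,
      GH.Reachable ⟨_, h₀⟩ ⟨((x : ℤ), (f v : ℤ), 0), hrow x hx⟩ := by
    intro x
    induction x with
    | zero => intro _; exact SimpleGraph.Reachable.refl _
    | succ k ih =>
      intro hx
      have hk : k ≤ n * n := by omega
      refine (ih hk).trans (SimpleGraph.Adj.reachable ?_)
      refine adj_of_gridAdj (hrow k hk) (hrow (k + 1) hx) ?_
      rw [show ((k + 1 : ℕ) : ℤ) = (k : ℤ) + 1 by push_cast; ring]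
      exact gridAdj_x _ _ _
  intro p hp
  rcases mem_pcube.1 hp with ⟨x, hx, rfl⟩ | ⟨u, hu, y, hy, rfl⟩
  · exact reachrow x hx
  · set e := xe n (f u) (f v) with he
    have hle : e ≤ n * n := xe_le (hf u) (hf v)
    have htooth : ∀ m : ℕ, m ≤ f v → ((e : ℤ), (m : ℤ), (1 : ℤ)) ∈ P :=
      fun m hm => mem_pcube.2 (Or.inr ⟨u, hu, m, hm, rfl⟩)
    have aux : ∀ m, ∀ hm : y ≤ m, ∀ hm2 : m ≤ f v,
        GH.Reachable ⟨((e : ℤ), (y : ℤ), 1), htooth y hy⟩ ⟨((e : ℤ), (m : ℤ), 1), htooth m hm2⟩ := by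
      intro m hm
      induction m, hm using Nat.le_induction with
      | base => intro _; exact SimpleGraph.Reachable.refl _
      | succ k hk ih =>
        intro h2
        have hk2 : k ≤ f v := by omega
        refine (ih hk2).trans (SimpleGraph.Adj.reachable ?_)
        refine adj_of_gridAdj (htooth k hk2) (htooth (k + 1) h2) ?_
        rw [show ((k + 1 : ℕ) : ℤ) = (k : ℤ) + 1 by push_cast; ring]
        exact gridAdj_y _ _ _
    have step1 : GH.Reachable ⟨_, h₀⟩ ⟨((e : ℤ), (f v : ℤ), 0), hrow e hle⟩ := reachrow e hle
    have step2 : GH.Adj ⟨((e : ℤ), (f v : ℤ), 0), hrow e hle⟩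
        ⟨((e : ℤ), (f v : ℤ), 1), htooth (f v) le_rfl⟩ := by
      refine adj_of_gridAdj _ _ ?_
      exact gridAdj_z _ _ _
    exact (step1.trans step2.reachable).trans (aux (f v) hy le_rfl).symm

end
end PolyAux


/-- Every finite simple graph is the intersection graph of a family of finite
grid-connected subsets of `ℤ³`. -/
theorem exists_polycube_intersection_representation {V : Type u} [Fintype V] [DecidableEq V]
    (G : SimpleGraph V) :
    ∃ P : V → Finset (ℤ × ℤ × ℤ),
      (∀ v, GridConnected (P v)) ∧
        ∀ u v, u ≠ v → (((P u) ∩ (P v)).Nonempty ↔ G.Adj u v) := by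
  classical
  set n := Fintype.card V with hn
  set f : V → ℕ := fun v => (Fintype.equivFin V v : ℕ) with hfdef
  have hf : ∀ v, f v < n := fun v => (Fintype.equivFin V v).2
  have hfinj : Function.Injective f := fun a b h => (Fintype.equivFin V).injective (Fin.ext h)
  refine ⟨PolyAux.pcube G f n, fun v => PolyAux.pcube_connected G hf v, ?_⟩
  intro u v huv
  have hfuv : f u ≠ f v := fun h => huv (hfinj h)
  constructor
  · rintro ⟨p, hp⟩
    rw [Finset.mem_inter] at hp
    obtain ⟨h1, h2⟩ := hp
    rcases PolyAux.mem_pcube.1 h1 with ⟨x, hx, rfl⟩ | ⟨w, hw, y, hy, rfl⟩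
    · rcases PolyAux.mem_pcube.1 h2 with ⟨x', hx', he⟩ | ⟨w', hw', y', hy', he⟩
      · simp only [Prod.mk.injEq] at he
        exact absurd (hfinj (by exact_mod_cast he.2.1)) huv
      · simp only [Prod.mk.injEq] at he
        exact absurd he.2.2 (by norm_num)
    · rcases PolyAux.mem_pcube.1 h2 with ⟨x', hx', he⟩ | ⟨w', hw', y', hy', he⟩
      · simp only [Prod.mk.injEq] at he
        exact absurd he.2.2 (by norm_num)
      · simp only [Prod.mk.injEq] at he
        have hxe : PolyAux.xe n (f w) (f u) = PolyAux.xe n (f w') (f v) := by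
          exact_mod_cast he.1
        obtain ⟨hmin, hmax⟩ := PolyAux.xe_inj (hf w) (hf u) (hf w') (hf v) hxe
        have : f u = f w' ∧ f v = f w := by omega
        have huw' : u = w' := hfinj this.1
        exact (huw' ▸ hw').symm
  · intro hadj
    refine ⟨((PolyAux.xe n (f v) (f u) : ℤ), 0, 1), Finset.mem_inter.2 ⟨?_, ?_⟩⟩
    · exact PolyAux.mem_pcube.2 (Or.inr ⟨v, hadj, 0, Nat.zero_le _, by norm_num⟩)
    · refine PolyAux.mem_pcube.2 (Or.inr ⟨u, hadj.symm, 0, Nat.zero_le _, ?_⟩)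
      rw [PolyAux.xe_comm]
      norm_num
end

section
/- In the wiring diagram construction, if two vertices v_i and v_j (i ≠ j) are adjacent in G via edge e_k, then their pieces V_i and V_j intersect (both contain the endpoint-segments of edge e_k's horizontal line); and if v_i and v_j are not adjacent, then V_i ∩ V_j is contained in crossover points where an edge of one passes over the vertical segment of the other, which are eliminated in the 3-dimensional lift, so the lifted pieces intersect if and only if v_i and v_j are adjacent in G. -/
/-- Vertical wiring-diagram segment of vertex `i`: `x = 4(i+1)`, `y ∈ [0, 2m]`. -/
def vseg {n : ℕ} (m : ℕ) (i : Fin n) : Set (ℤ × ℤ) :=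
  {p | p.1 = 4 * ((i : ℤ) + 1) ∧ 0 ≤ p.2 ∧ p.2 ≤ 2 * (m : ℤ)}

/-- Horizontal wiring-diagram segment of edge `k` with endpoints `ep k = (j, h)`:
`y = 2(k+1)`, `x ∈ [4(j+1), 4(h+1)]`. -/
def hseg {n m : ℕ} (ep : Fin m → Fin n × Fin n) (k : Fin m) : Set (ℤ × ℤ) :=
  {p | p.2 = 2 * ((k : ℤ) + 1) ∧
    4 * (((ep k).1 : ℤ) + 1) ≤ p.1 ∧ p.1 ≤ 4 * (((ep k).2 : ℤ) + 1)}

/-- The wiring-diagram piece of vertex `i`: its vertical segment together with the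
horizontal segments of all incident edges. -/
def piece2 {n m : ℕ} (ep : Fin m → Fin n × Fin n) (i : Fin n) : Set (ℤ × ℤ) :=
  vseg m i ∪ ⋃ k, ⋃ _ : (ep k).1 = i ∨ (ep k).2 = i, hseg ep k

/-- The `x`-coordinates of edge `k` near a crossover: `x` is within distance 1 of the
vertical line of some vertex strictly between the endpoints of `k`. -/
def Raised {n m : ℕ} (ep : Fin m → Fin n × Fin n) (k : Fin m) (x : ℤ) : Prop :=
  ∃ i : Fin n, (ep k).1 < i ∧ i < (ep k).2 ∧ |x - 4 * ((i : ℤ) + 1)| ≤ 1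

/-- Lifted vertical segment of vertex `i`, at height `z = 0`. -/
def vseg3 {n : ℕ} (m : ℕ) (i : Fin n) : Set (ℤ × ℤ × ℤ) :=
  {p | p.1 = 4 * ((i : ℤ) + 1) ∧ 0 ≤ p.2.1 ∧ p.2.1 ≤ 2 * (m : ℤ) ∧ p.2.2 = 0}

/-- Lifted horizontal segment of edge `k`: at height `z = 1` over crossovers
and `z = 0` elsewhere. -/
def eseg3 {n m : ℕ} (ep : Fin m → Fin n × Fin n) (k : Fin m) : Set (ℤ × ℤ × ℤ) :=
  {p | p.2.1 = 2 * ((k : ℤ) + 1) ∧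
    4 * (((ep k).1 : ℤ) + 1) ≤ p.1 ∧ p.1 ≤ 4 * (((ep k).2 : ℤ) + 1) ∧
    ((Raised ep k p.1 ∧ p.2.2 = 1) ∨ (¬ Raised ep k p.1 ∧ p.2.2 = 0))}

/-- The lifted piece of vertex `i`. -/
def piece3 {n m : ℕ} (ep : Fin m → Fin n × Fin n) (i : Fin n) : Set (ℤ × ℤ × ℤ) :=
  vseg3 m i ∪ ⋃ k, ⋃ _ : (ep k).1 = i ∨ (ep k).2 = i, eseg3 ep k


lemma eseg3_subset_piece3 {n m : ℕ} (ep : Fin m → Fin n × Fin n) (k : Fin m) (i : Fin n)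
    (h : (ep k).1 = i ∨ (ep k).2 = i) : eseg3 ep k ⊆ piece3 ep i := fun _p hp =>
  Or.inr (Set.mem_iUnion.2 ⟨k, Set.mem_iUnion.2 ⟨h, hp⟩⟩)

lemma not_raised_endpoint {n m : ℕ} (ep : Fin m → Fin n × Fin n) (k : Fin m) (i : Fin n)
    (h : (ep k).1 = i ∨ (ep k).2 = i) : ¬ Raised ep k (4 * ((i : ℤ) + 1)) := by
  rintro ⟨i', h1, h2, h3⟩
  rw [Fin.lt_def] at h1 h2
  rw [abs_le] at h3
  rcases h with h | h <;> subst h <;> omega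

lemma endpoint_of_not_raised {n m : ℕ} (ep : Fin m → Fin n × Fin n) (k : Fin m) (i : Fin n)
    (hl : 4 * (((ep k).1 : ℤ) + 1) ≤ 4 * ((i : ℤ) + 1))
    (hr : 4 * ((i : ℤ) + 1) ≤ 4 * (((ep k).2 : ℤ) + 1))
    (hnr : ¬ Raised ep k (4 * ((i : ℤ) + 1))) :
    (ep k).1 = i ∨ (ep k).2 = i := by
  by_contra hc
  push_neg at hc
  apply hnr
  refine ⟨i, ?_, ?_, by simp⟩
  · rw [Fin.lt_def]
    have : ((ep k).1 : Fin n).val ≠ i.val := fun h => hc.1 (Fin.ext h)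
    omega
  · rw [Fin.lt_def]
    have : ((ep k).2 : Fin n).val ≠ i.val := fun h => hc.2 (Fin.ext h)
    omega

/-- Adjacent vertices have pieces sharing the whole segment of the common edge, and
after the 3-dimensional lift eliminates the crossover intersections, two lifted
pieces intersect iff the corresponding vertices are adjacent. -/
theorem wiringDiagram_lift_intersection_iff_adjacent {n m : ℕ}
    (ep : Fin m → Fin n × Fin n) (hlt : ∀ k, (ep k).1 < (ep k).2) :
    (∀ k : Fin m, hseg ep k ⊆ piece2 ep (ep k).1 ∩ piece2 ep (ep k).2) ∧
      ∀ i j : Fin n, i ≠ j →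
        ((piece3 ep i ∩ piece3 ep j).Nonempty ↔
          ∃ k, ep k = (i, j) ∨ ep k = (j, i)) := by
  constructor
  · intro k p hp
    exact ⟨Or.inr (Set.mem_iUnion.2 ⟨k, Set.mem_iUnion.2 ⟨Or.inl rfl, hp⟩⟩),
           Or.inr (Set.mem_iUnion.2 ⟨k, Set.mem_iUnion.2 ⟨Or.inr rfl, hp⟩⟩)⟩
  · intro i j hij
    constructor
    · rintro ⟨p, hpi, hpj⟩
      rcases hpi with hvi | hi
      · rcases hpj with hvj | hj
        · exfalso
          have : (i : ℤ) = (j : ℤ) := by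
            have h1 := hvi.1; have h2 := hvj.1; omega
          exact hij (Fin.ext (by exact_mod_cast this))
        · simp only [Set.mem_iUnion] at hj
          obtain ⟨k, hk, he⟩ := hj
          obtain ⟨hx, _, _, hz⟩ := hvi
          obtain ⟨_, hl, hr, hzz⟩ := he
          rw [hx] at hl hr hzz
          have hnr : ¬ Raised ep k (4 * ((i : ℤ) + 1)) := by
            rcases hzz with ⟨_, h1⟩ | ⟨h1, _⟩
            · omega
            · exact h1
          have := endpoint_of_not_raised ep k i hl hr hnr
          rcases this with h | h <;> rcases hk with hk | hk
          · exact absurd (h ▸ hk) hij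
          · exact ⟨k, Or.inl (Prod.ext h hk)⟩
          · exact ⟨k, Or.inr (Prod.ext hk h)⟩
          · exact absurd (h ▸ hk) hij
      · simp only [Set.mem_iUnion] at hi
        obtain ⟨k, hk, he⟩ := hi
        rcases hpj with hvj | hj
        · obtain ⟨hx, _, _, hz⟩ := hvj
          obtain ⟨_, hl, hr, hzz⟩ := he
          rw [hx] at hl hr hzz
          have hnr : ¬ Raised ep k (4 * ((j : ℤ) + 1)) := by
            rcases hzz with ⟨_, h1⟩ | ⟨h1, _⟩
            · omega
            · exact h1
          have := endpoint_of_not_raised ep k j hl hr hnr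
          rcases this with h | h <;> rcases hk with hk | hk
          · exact absurd (h ▸ hk) (Ne.symm hij)
          · exact ⟨k, Or.inr (Prod.ext h hk)⟩
          · exact ⟨k, Or.inl (Prod.ext hk h)⟩
          · exact absurd (h ▸ hk) (Ne.symm hij)
        · simp only [Set.mem_iUnion] at hj
          obtain ⟨k', hk', he'⟩ := hj
          have hkk : k = k' := by
            have h1 := he.1; have h2 := he'.1
            have : (k : ℤ) = (k' : ℤ) := by omega
            exact Fin.ext (by exact_mod_cast this)
          subst hkk
          rcases hk with hk | hk <;> rcases hk' with hk' | hk'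
          · exact absurd (hk ▸ hk') hij
          · exact ⟨k, Or.inl (Prod.ext hk hk')⟩
          · exact ⟨k, Or.inr (Prod.ext hk' hk)⟩
          · exact absurd (hk ▸ hk') hij
    · rintro ⟨k, hk⟩
      have hmem : ∀ i', (ep k).1 = i' →
          (4 * ((i' : ℤ) + 1), 2 * ((k : ℤ) + 1), (0:ℤ)) ∈ eseg3 ep k := by
        intro i' hi'
        refine ⟨rfl, by rw [← hi'], ?_, Or.inr ⟨?_, rfl⟩⟩
        · have := hlt k
          rw [Fin.lt_def] at this
          subst hi'
          simp only
          omega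
        · exact not_raised_endpoint ep k i' (Or.inl hi')
      rcases hk with hk | hk
      · refine ⟨(4 * ((i : ℤ) + 1), 2 * ((k : ℤ) + 1), 0), ?_, ?_⟩
        · exact eseg3_subset_piece3 ep k i (Or.inl (by rw [hk])) (hmem i (by rw [hk]))
        · exact eseg3_subset_piece3 ep k j (Or.inr (by rw [hk])) (hmem i (by rw [hk]))
      · refine ⟨(4 * ((j : ℤ) + 1), 2 * ((k : ℤ) + 1), 0), ?_, ?_⟩
        · exact eseg3_subset_piece3 ep k i (Or.inr (by rw [hk])) (hmem j (by rw [hk]))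
        · exact eseg3_subset_piece3 ep k j (Or.inl (by rw [hk])) (hmem j (by rw [hk]))
end
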